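/- Let (ω,ϖ,χ,μ,ρ_B,ρ_M) be a non-abelian 2-cocycle on a relative Rota-Baxter Lie algebra 𝒜 = ((A,[·,·]_A),(V,ρ),T) with values in an abelian relative Rota-Baxter Lie algebra ℬ = ((B,0),(M,0),S) (i.e., [·,·]_B = 0 and ν_M = 0). Then (ρ_B, ρ_M, μ) is a representation of 𝒜 on the 2-term complex M →^S B; in particular ρ_B and ρ_M are Lie algebra representations of A, μ(ρ(x)v) = ρ_M(x)μ(v) − μ(v)ρ_B(x), and ρ_B(T(v))S = Sρ_M(T(v)) + Sμ(v)S. -/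
import Mathlib


universe u

section
variable (K : Type u) [Field K]

/-- A relative Rota-Baxter Lie algebra: a Lie algebra `A`, a representation `rep` of `A`
on `V`, and a relative Rota-Baxter operator `T : V → A`. -/
structure RelRB (A V : Type u) [AddCommGroup A] [Module K A]
    [AddCommGroup V] [Module K V] : Type u where
  br : A →ₗ[K] A →ₗ[K] A
  skew : ∀ x y, br x y + br y x = 0
  jacobi : ∀ x y z, br x (br y z) = br (br x y) z + br y (br x z)
  rep : A →ₗ[K] Module.End K V
  rep_br : ∀ x y, rep (br x y) = rep x * rep y - rep y * rep x
  T : V →ₗ[K] A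
  rb : ∀ u v, br (T u) (T v) = T (rep (T u) v - rep (T v) u)

variable {A V B M : Type u}
  [AddCommGroup A] [Module K A] [AddCommGroup V] [Module K V]
  [AddCommGroup B] [Module K B] [AddCommGroup M] [Module K M]

/-- A non-abelian 2-cocycle on `𝒜` with values in `ℬ`: identities (L1)-(L9). -/
def IsNACocycle (𝒜 : RelRB K A V) (ℬ : RelRB K B M)
    (ω : A → A → B) (ϖ : A → V → M) (χ : V → B)
    (μ : V → B → M) (ρB : A → B → B) (ρM : A → M → M) : Prop :=
  (∀ x y, ω x y + ω y x = 0) ∧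
  (∀ x y a, ρB x (ρB y a) - ρB y (ρB x a) - ρB (𝒜.br x y) a = ℬ.br (ω x y) a) ∧
  (∀ x y z, ρB x (ω y z) + ρB y (ω z x) + ρB z (ω x y)
      = ω (𝒜.br x y) z + ω (𝒜.br y z) x + ω (𝒜.br z x) y) ∧
  (∀ x y v, ϖ x (𝒜.rep y v) - ϖ y (𝒜.rep x v) - ϖ (𝒜.br x y) v
      = ρM y (ϖ x v) - ρM x (ϖ y v) - μ v (ω x y)) ∧
  (∀ x y m, ρM x (ρM y m) - ρM y (ρM x m) = ρM (𝒜.br x y) m + ℬ.rep (ω x y) m) ∧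
  (∀ x v a, ρM x (μ v a) - μ (𝒜.rep x v) a + ℬ.rep a (ϖ x v) = μ v (ρB x a)) ∧
  (∀ x a m, ρM x (ℬ.rep a m) - ℬ.rep a (ρM x m) = ℬ.rep (ρB x a) m) ∧
  (∀ v m, ρB (𝒜.T v) (ℬ.T m) + ℬ.br (χ v) (ℬ.T m)
      = ℬ.T (ρM (𝒜.T v) m + ℬ.rep (χ v) m + μ v (ℬ.T m))) ∧
  (∀ v₁ v₂, ρB (𝒜.T v₁) (χ v₂) - ρB (𝒜.T v₂) (χ v₁) + ℬ.br (χ v₁) (χ v₂)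
        + ω (𝒜.T v₁) (𝒜.T v₂)
      = ℬ.T (ϖ (𝒜.T v₁) v₂ - ϖ (𝒜.T v₂) v₁)
        + χ (𝒜.rep (𝒜.T v₁) v₂ - 𝒜.rep (𝒜.T v₂) v₁)
        + ℬ.T (μ v₁ (χ v₂) - μ v₂ (χ v₁)))
/-- a non-abelian 2-cocycle with values in an abelian relative Rota-Baxter
Lie algebra gives a representation `(ρB, ρM, μ)` of `𝒜` on the 2-term complex
`M →^S B`. -/
theorem cocycle_into_abelian_gives_representation (𝒜 : RelRB K A V) (ℬ : RelRB K B M)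
    (habr : ∀ a b, ℬ.br a b = 0) (habrep : ∀ (a : B) (m : M), ℬ.rep a m = 0)
    (ω : A →ₗ[K] A →ₗ[K] B) (ϖ : A →ₗ[K] V →ₗ[K] M) (χ : V →ₗ[K] B)
    (μ : V →ₗ[K] B →ₗ[K] M) (ρB : A →ₗ[K] Module.End K B)
    (ρM : A →ₗ[K] Module.End K M)
    (hc : IsNACocycle K 𝒜 ℬ (fun x y => ω x y) (fun x v => ϖ x v) (fun v => χ v)
      (fun v a => μ v a) (fun x a => ρB x a) (fun x m => ρM x m)) :
    (∀ x y a, ρB (𝒜.br x y) a = ρB x (ρB y a) - ρB y (ρB x a)) ∧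
    (∀ x y m, ρM (𝒜.br x y) m = ρM x (ρM y m) - ρM y (ρM x m)) ∧
    (∀ x v a, μ (𝒜.rep x v) a = ρM x (μ v a) - μ v (ρB x a)) ∧
    (∀ v m, ρB (𝒜.T v) (ℬ.T m) = ℬ.T (ρM (𝒜.T v) m) + ℬ.T (μ v (ℬ.T m))) := by
  obtain ⟨h1, h2, h3, h4, h5, h6, h7, h8, h9⟩ := hc
  dsimp only at h2 h5 h6 h8
  refine ⟨?_, ?_, ?_, ?_⟩
  · intro x y a
    have := h2 x y a
    rw [habr, sub_sub, sub_eq_zero] at this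
    rw [this]; abel
  · intro x y m
    have := h5 x y m
    rw [habrep, add_zero] at this
    rw [this]
  · intro x v a
    have := h6 x v a
    rw [habrep, add_zero] at this
    rw [← this]; abel
  · intro v m
    have := h8 v m
    rw [habr, habrep] at this
    simp only [add_zero, zero_add] at this
    rw [this, map_add]

end
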